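/- Suppose the random transition matrix A is uniformly aperiodic: there is N ∈ ℕ such that every entry of A^{(N)}(η) is at least 1 for every η ∈ Ω. Fix ω ∈ Ω, v ∈ ℝ^k, and λ ∈ ℝ such that lim_{n→∞}(1/n) log ‖v·A^{(n)}(ω)‖₁ exists and equals λ, and assume that for every n ≥ 0 the vector v(θⁿω) = v·A^{(n)}(ω) has at least one strictly positive coordinate and at least one strictly negative coordinate. Then limsup_{n→∞}(1/n) log ‖𝟙·B^{(n)}(ω)‖₁ ≥ λ, where 𝟙 = (1,…,1); equivalently, the topological entropy of the subshift determined by B along the orbit of ω, limsup_{n→∞}(1/n) log Σ_{i,j} B^{(n)}_{ij}(ω), is at least λ. -/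

import Mathlib

/-!
Let `T n = ∑ᵢⱼ B⁽ⁿ⁾ᵢⱼ(ω)`. Mass can only pass from a positive coordinate of `v(θˢω)` to a positive
coordinate of `v(θˢ⁺¹ω)` along entries that `B` keeps, so the positive part of `v(θⁿω)` is at
most `(v⁺)·B⁽ⁿ⁾(ω)`, whose total mass is at most `‖v‖₁ T n`. Conversely, `v(θⁿ⁺ᴺω)` has a
positive coordinate and `1 ≤ A⁽ᴺ⁾ ≤ kᴺ` entrywise, so the negative mass of `v(θⁿω)` is at most
`kᴺ` times its positive mass. Hence `‖v(θⁿω)‖₁ ≤ (kᴺ + 1) ‖v‖₁ T n`, and taking `(1/n) log`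
gives `λ ≤ limsup (1/n) log T n`.
-/

open MeasureTheory Filter Topology

/-- The matrix cocycle: `matIter θ A n ω = A(ω)A(θω)⋯A(θ^{n-1}ω)` (with `matIter θ A 0 ω = 1`). -/
noncomputable def matIter {Ω : Type*} {k : ℕ} (θ : Ω → Ω)
    (A : Ω → Matrix (Fin k) (Fin k) ℝ) : ℕ → Ω → Matrix (Fin k) (Fin k) ℝ
  | 0, _ => 1
  | n + 1, ω => A ω * matIter θ A n (θ ω)

/-- The ℓ¹ norm of a row vector: `‖v‖₁ = Σᵢ |vᵢ|`. -/
noncomputable def l1norm {k : ℕ} (v : Fin k → ℝ) : ℝ := ∑ i, |v i|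

/-- The matrix `B(θⁿω)`: `B_{ij}(θⁿω) = A_{ij}(θⁿω)` if `(v·A^{(n)}(ω))_i > 0` and
`(v·A^{(n+1)}(ω))_j > 0`, and `0` otherwise. -/
noncomputable def Bmat {Ω : Type*} {k : ℕ} (θ : Ω → Ω)
    (A : Ω → Matrix (Fin k) (Fin k) ℝ) (v : Fin k → ℝ) (ω : Ω) (n : ℕ) :
    Matrix (Fin k) (Fin k) ℝ :=
  fun i j =>
    if 0 < Matrix.vecMul v (matIter θ A n ω) i ∧
        0 < Matrix.vecMul v (matIter θ A (n + 1) ω) j then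
      A (θ^[n] ω) i j
    else 0

/-- `BIter θ A v ω s n = B(θˢω)B(θ^{s+1}ω)⋯B(θ^{s+n-1}ω)`; in particular
`BIter θ A v ω 0 n = B^{(n)}(ω)`. -/
noncomputable def BIter {Ω : Type*} {k : ℕ} (θ : Ω → Ω)
    (A : Ω → Matrix (Fin k) (Fin k) ℝ) (v : Fin k → ℝ) (ω : Ω) :
    ℕ → ℕ → Matrix (Fin k) (Fin k) ℝ
  | _, 0 => 1
  | s, n + 1 => Bmat θ A v ω s * BIter θ A v ω (s + 1) n

lemma Matrix.vecMul_mono_left {m n R : Type*} [Fintype m] [Semiring R] [PartialOrder R]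
    [IsOrderedRing R] {M : Matrix m n R} (hM : ∀ i j, 0 ≤ M i j) {w w' : m → R} (h : w ≤ w') :
    Matrix.vecMul w M ≤ Matrix.vecMul w' M :=
  fun j => by
    simp only [Matrix.vecMul_apply_eq_sum]
    exact Finset.sum_le_sum fun i _ => mul_le_mul_of_nonneg_right (h i) (hM i j)

lemma l1norm_one_vecMul {k : ℕ} {M : Matrix (Fin k) (Fin k) ℝ} (hM : ∀ i j, 0 ≤ M i j) :
    l1norm (Matrix.vecMul (fun _ => (1 : ℝ)) M) = ∑ i, ∑ j, M i j := by
  simp only [l1norm, Matrix.vecMul_apply_eq_sum, one_mul]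
  exact (Finset.sum_congr rfl fun j _ =>
    abs_of_nonneg (Finset.sum_nonneg fun i _ => hM i j)).trans Finset.sum_comm

lemma posPart_le_l1norm {k : ℕ} (v : Fin k → ℝ) (i : Fin k) : (v i)⁺ ≤ l1norm v :=
  (posPart_def (v i)).trans_le (sup_le (le_abs_self _) (abs_nonneg _)) |>.trans
    (Finset.single_le_sum (f := fun i => |v i|) (fun _ _ => abs_nonneg _) (Finset.mem_univ i))

/-- The positive column of `w ⬝ M` keeps the negative mass of `w` below `c` times its positive
mass. -/
lemma l1norm_le_of_vecMul_pos {k : ℕ} (w : Fin k → ℝ) {M : Matrix (Fin k) (Fin k) ℝ} {c : ℝ}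
    (hM1 : ∀ i j, 1 ≤ M i j) (hMc : ∀ i j, M i j ≤ c) {j : Fin k}
    (hj : 0 < Matrix.vecMul w M j) :
    l1norm w ≤ (c + 1) * ∑ i, (w i)⁺ := by
  have hterm : ∀ i, w i * M i j ≤ c * (w i)⁺ - (w i)⁻ := by
    intro i
    rcases le_or_gt 0 (w i) with h | h
    · rw [posPart_eq_self.2 h, negPart_eq_zero.2 h, sub_zero, mul_comm c]
      exact mul_le_mul_of_nonneg_left (hMc i j) h
    · rw [posPart_eq_zero.2 h.le, negPart_eq_neg.2 h.le, mul_zero, zero_sub]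
      nlinarith [hM1 i j]
  have hmass : 0 < c * ∑ i, (w i)⁺ - ∑ i, (w i)⁻ := by
    rw [Finset.mul_sum, ← Finset.sum_sub_distrib]
    rw [Matrix.vecMul_apply_eq_sum] at hj
    exact hj.trans_le (Finset.sum_le_sum fun i _ => hterm i)
  have hsplit : l1norm w = ∑ i, (w i)⁺ + ∑ i, (w i)⁻ := by
    simp only [l1norm, ← posPart_add_negPart, Finset.sum_add_distrib]
  rw [hsplit]
  linarith

lemma isBoundedUnder_inv_mul_log_of_le_pow {b : ℕ → ℝ} {c : ℝ} (m : ℕ) (hc : 1 ≤ c)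
    (hb0 : ∀ n, 0 ≤ b n) (hb : ∀ n, b n ≤ c ^ (n + m)) :
    IsBoundedUnder (· ≤ ·) atTop fun n : ℕ => (n : ℝ)⁻¹ * Real.log (b n) := by
  have hlogc : 0 ≤ Real.log c := Real.log_nonneg hc
  refine isBoundedUnder_of ⟨(m + 1) * Real.log c, fun n => ?_⟩
  rcases Nat.eq_zero_or_pos n with rfl | hn
  · simp only [Nat.cast_zero, inv_zero, zero_mul]
    positivity
  have hlog : Real.log (b n) ≤ (n + m) * Real.log c := by
    rcases (hb0 n).eq_or_lt with h | h
    · rw [← h, Real.log_zero]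
      positivity
    · calc Real.log (b n) ≤ Real.log (c ^ (n + m)) := Real.log_le_log h (hb n)
        _ = (n + m) * Real.log c := by rw [Real.log_pow]; push_cast; ring
  have hn' : (1 : ℝ) ≤ n := by exact_mod_cast hn
  have hratio : (n : ℝ)⁻¹ * (n + m) ≤ m + 1 := by
    rw [inv_mul_le_iff₀ (by positivity)]
    nlinarith
  calc (n : ℝ)⁻¹ * Real.log (b n) ≤ (n : ℝ)⁻¹ * ((n + m) * Real.log c) := by gcongr
    _ = (n : ℝ)⁻¹ * (n + m) * Real.log c := by ring
    _ ≤ (m + 1) * Real.log c := by gcongr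

lemma le_limsup_inv_mul_log_of_le_mul {a b : ℕ → ℝ} {D lam : ℝ} (ha : ∀ n, 0 < a n)
    (hab : ∀ n, a n ≤ D * b n)
    (hlim : Tendsto (fun n : ℕ => (n : ℝ)⁻¹ * Real.log (a n)) atTop (𝓝 lam))
    (hbdd : IsBoundedUnder (· ≤ ·) atTop fun n : ℕ => (n : ℝ)⁻¹ * Real.log (b n)) :
    lam ≤ limsup (fun n : ℕ => (n : ℝ)⁻¹ * Real.log (b n)) atTop := by
  set u : ℕ → ℝ := fun n => (n : ℝ)⁻¹ * Real.log (a n) - (n : ℝ)⁻¹ * Real.log D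
  have hu : Tendsto u atTop (𝓝 lam) := by
    simpa using hlim.sub (tendsto_inv_atTop_nhds_zero_nat.mul_const (Real.log D))
  have hu_le : ∀ n, u n ≤ (n : ℝ)⁻¹ * Real.log (b n) := by
    intro n
    have hDb : 0 < D * b n := (ha n).trans_le (hab n)
    have hlog := Real.log_le_log (ha n) (hab n)
    rw [Real.log_mul (left_ne_zero_of_mul hDb.ne') (right_ne_zero_of_mul hDb.ne')] at hlog
    simp only [u, ← mul_sub]
    exact mul_le_mul_of_nonneg_left (by linarith) (by positivity)
  rw [← hu.limsup_eq]
  exact limsup_le_limsup (.of_forall hu_le) hu.isCoboundedUnder_le hbdd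

section Cocycle

variable {Ω : Type*} {k : ℕ} {θ : Ω → Ω} {A : Ω → Matrix (Fin k) (Fin k) ℝ}

lemma matIter_succ' (n : ℕ) (ω : Ω) :
    matIter θ A (n + 1) ω = matIter θ A n ω * A (θ^[n] ω) := by
  induction n generalizing ω with
  | zero => simp [matIter]
  | succ n ih =>
    rw [matIter, ih (θ ω), ← mul_assoc, ← matIter, ← Function.iterate_succ_apply]

lemma matIter_add (m n : ℕ) (ω : Ω) :
    matIter θ A (m + n) ω = matIter θ A m ω * matIter θ A n (θ^[m] ω) := by
  induction n with
  | zero => simp [matIter]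
  | succ n ih =>
    rw [← add_assoc, matIter_succ', ih, matIter_succ', mul_assoc, add_comm m n,
      Function.iterate_add_apply]

lemma matIter_nonneg (hA : ∀ ω i j, 0 ≤ A ω i j) (n : ℕ) (ω : Ω) (i j : Fin k) :
    0 ≤ matIter θ A n ω i j := by
  induction n generalizing ω i j with
  | zero => simp only [matIter, Matrix.one_apply]; split <;> norm_num
  | succ n ih =>
    rw [matIter, Matrix.mul_apply]
    exact Finset.sum_nonneg fun l _ => mul_nonneg (hA ω i l) (ih (θ ω) l j)

lemma matIter_le_pow (hA : ∀ ω i j, 0 ≤ A ω i j) (hA1 : ∀ ω i j, A ω i j ≤ 1) (n : ℕ)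
    (ω : Ω) (i j : Fin k) : matIter θ A n ω i j ≤ (k : ℝ) ^ n := by
  induction n generalizing ω i j with
  | zero => simp only [matIter, Matrix.one_apply, pow_zero]; split <;> norm_num
  | succ n ih =>
    calc matIter θ A (n + 1) ω i j = ∑ l, A ω i l * matIter θ A n (θ ω) l j := rfl
      _ ≤ ∑ _l : Fin k, 1 * (k : ℝ) ^ n := Finset.sum_le_sum fun l _ =>
          mul_le_mul (hA1 ω i l) (ih (θ ω) l j) (matIter_nonneg hA n (θ ω) l j) zero_le_one
      _ = (k : ℝ) ^ (n + 1) := by simp [pow_succ']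

variable (θ) (v : Fin k → ℝ) (ω : Ω)

lemma Bmat_nonneg (hA : ∀ ω i j, 0 ≤ A ω i j) (s : ℕ) (i j : Fin k) :
    0 ≤ Bmat θ A v ω s i j := by
  unfold Bmat; split
  · exact hA _ i j
  · exact le_rfl

lemma Bmat_le (hA : ∀ ω i j, 0 ≤ A ω i j) (s : ℕ) (i j : Fin k) :
    Bmat θ A v ω s i j ≤ A (θ^[s] ω) i j := by
  unfold Bmat; split
  · exact le_rfl
  · exact hA _ i j

lemma BIter_nonneg (hA : ∀ ω i j, 0 ≤ A ω i j) (n s : ℕ) (i j : Fin k) :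
    0 ≤ BIter θ A v ω s n i j := by
  induction n generalizing s i j with
  | zero => simp only [BIter, Matrix.one_apply]; split <;> norm_num
  | succ n ih =>
    rw [BIter, Matrix.mul_apply]
    exact Finset.sum_nonneg fun l _ => mul_nonneg (Bmat_nonneg θ v ω hA s i l) (ih (s + 1) l j)

lemma BIter_le_matIter (hA : ∀ ω i j, 0 ≤ A ω i j) (n s : ℕ) (i j : Fin k) :
    BIter θ A v ω s n i j ≤ matIter θ A n (θ^[s] ω) i j := by
  induction n generalizing s i j with
  | zero => rfl
  | succ n ih =>
    rw [BIter, matIter, Matrix.mul_apply, Matrix.mul_apply, ← Function.iterate_succ_apply' θ s ω]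
    exact Finset.sum_le_sum fun l _ => mul_le_mul (Bmat_le θ v ω hA s i l) (ih (s + 1) l j)
      (BIter_nonneg θ v ω hA n (s + 1) l j) (hA _ i l)

lemma sum_BIter_le_pow (hA : ∀ ω i j, 0 ≤ A ω i j) (hA1 : ∀ ω i j, A ω i j ≤ 1) (n : ℕ) :
    ∑ i, ∑ j, BIter θ A v ω 0 n i j ≤ (k : ℝ) ^ (n + 2) :=
  calc ∑ i, ∑ j, BIter θ A v ω 0 n i j ≤ ∑ _i : Fin k, ∑ _j : Fin k, (k : ℝ) ^ n :=
        Finset.sum_le_sum fun i _ => Finset.sum_le_sum fun j _ =>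
          (BIter_le_matIter θ v ω hA n 0 i j).trans (matIter_le_pow hA hA1 n ω i j)
    _ = (k : ℝ) ^ (n + 2) := by simp [pow_add]; ring

/-- A coordinate that is positive at time `s + 1` receives its positive contributions only
from coordinates positive at time `s`, through entries that `B` keeps. -/
lemma posPart_vecMul_matIter_succ_le (hA : ∀ ω i j, 0 ≤ A ω i j) (s : ℕ) :
    (Matrix.vecMul v (matIter θ A (s + 1) ω))⁺ ≤
      Matrix.vecMul (Matrix.vecMul v (matIter θ A s ω))⁺ (Bmat θ A v ω s) := by
  intro j
  set w := Matrix.vecMul v (matIter θ A s ω)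
  have hrhs : 0 ≤ Matrix.vecMul w⁺ (Bmat θ A v ω s) j := by
    rw [Matrix.vecMul_apply_eq_sum]
    exact Finset.sum_nonneg fun l _ => mul_nonneg (posPart_nonneg _) (Bmat_nonneg θ v ω hA s l j)
  rw [Pi.posPart_apply]
  rcases le_or_gt (Matrix.vecMul v (matIter θ A (s + 1) ω) j) 0 with hj | hj
  · rwa [posPart_eq_zero.2 hj]
  rw [posPart_eq_self.2 hj.le]
  have hexp : Matrix.vecMul v (matIter θ A (s + 1) ω) = Matrix.vecMul w (A (θ^[s] ω)) := by
    rw [matIter_succ', ← Matrix.vecMul_vecMul]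
  rw [hexp, Matrix.vecMul_apply_eq_sum, Matrix.vecMul_apply_eq_sum]
  refine Finset.sum_le_sum fun l _ => ?_
  rcases le_or_gt (w l) 0 with hl | hl
  · rw [Pi.posPart_apply, posPart_eq_zero.2 hl, zero_mul]
    exact mul_nonpos_of_nonpos_of_nonneg hl (hA _ l j)
  · rw [Pi.posPart_apply, posPart_eq_self.2 hl.le, Bmat, if_pos ⟨hl, hexp ▸ hj⟩]

lemma posPart_vecMul_matIter_le (hA : ∀ ω i j, 0 ≤ A ω i j) (n s : ℕ) :
    (Matrix.vecMul v (matIter θ A (s + n) ω))⁺ ≤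
      Matrix.vecMul (Matrix.vecMul v (matIter θ A s ω))⁺ (BIter θ A v ω s n) := by
  induction n generalizing s with
  | zero => simp [BIter]
  | succ n ih =>
    calc (Matrix.vecMul v (matIter θ A (s + (n + 1)) ω))⁺
        ≤ Matrix.vecMul (Matrix.vecMul v (matIter θ A (s + 1) ω))⁺ (BIter θ A v ω (s + 1) n) := by
          rw [← add_comm 1 n, ← add_assoc]; exact ih (s + 1)
      _ ≤ Matrix.vecMul (Matrix.vecMul (Matrix.vecMul v (matIter θ A s ω))⁺ (Bmat θ A v ω s))
            (BIter θ A v ω (s + 1) n) :=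
          Matrix.vecMul_mono_left (BIter_nonneg θ v ω hA n (s + 1))
            (posPart_vecMul_matIter_succ_le θ v ω hA s)
      _ = _ := by rw [Matrix.vecMul_vecMul, BIter]

lemma l1norm_vecMul_matIter_le (hA : ∀ ω i j, 0 ≤ A ω i j) (hA1 : ∀ ω i j, A ω i j ≤ 1)
    {N : ℕ} (haper : ∀ η i j, 1 ≤ matIter θ A N η i j) (n : ℕ)
    (hpos : ∃ j, 0 < Matrix.vecMul v (matIter θ A (n + N) ω) j) :
    l1norm (Matrix.vecMul v (matIter θ A n ω)) ≤
      ((k : ℝ) ^ N + 1) * l1norm v * ∑ i, ∑ j, BIter θ A v ω 0 n i j := by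
  obtain ⟨j, hj⟩ := hpos
  set w := Matrix.vecMul v (matIter θ A n ω)
  rw [matIter_add, ← Matrix.vecMul_vecMul] at hj
  have hprop := posPart_vecMul_matIter_le θ v ω hA n 0
  simp only [zero_add, matIter, Matrix.vecMul_one] at hprop
  have hmass : ∑ j, (w j)⁺ ≤ l1norm v * ∑ i, ∑ j, BIter θ A v ω 0 n i j := by
    calc ∑ j, (w j)⁺ ≤ ∑ j, ∑ i, l1norm v * BIter θ A v ω 0 n i j :=
          Finset.sum_le_sum fun j _ => ((hprop j).trans_eq (Matrix.vecMul_apply_eq_sum _ _ _)).trans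
            (Finset.sum_le_sum fun i _ => mul_le_mul_of_nonneg_right (posPart_le_l1norm v i)
              (BIter_nonneg θ v ω hA n 0 i j))
      _ = l1norm v * ∑ i, ∑ j, BIter θ A v ω 0 n i j := by
          simp only [Finset.mul_sum]
          exact Finset.sum_comm
  calc l1norm w ≤ ((k : ℝ) ^ N + 1) * ∑ j, (w j)⁺ :=
        l1norm_le_of_vecMul_pos w (haper _) (matIter_le_pow hA hA1 N _) hj
    _ ≤ _ := by rw [mul_assoc]; gcongr

end Cocycle

theorem subshift_entropy_ge_exponent_general
    {Ω : Type*}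
    (θ : Ω → Ω)
    (k : ℕ)
    (A : Ω → Matrix (Fin k) (Fin k) ℝ)
    (h01 : ∀ ω i j, A ω i j = 0 ∨ A ω i j = 1)
    (N : ℕ) (haper : ∀ η i j, 1 ≤ matIter θ A N η i j)
    (ω : Ω) (v : Fin k → ℝ) (lam : ℝ)
    (hlim : Filter.Tendsto
      (fun n : ℕ => (n : ℝ)⁻¹ * Real.log (l1norm (Matrix.vecMul v (matIter θ A n ω))))
      Filter.atTop (𝓝 lam))
    (hsign : ∀ n : ℕ,
      (∃ i, 0 < Matrix.vecMul v (matIter θ A n ω) i) ∧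
      (∃ i, Matrix.vecMul v (matIter θ A n ω) i < 0)) :
    lam ≤ Filter.limsup
        (fun n : ℕ => (n : ℝ)⁻¹ *
          Real.log (l1norm (Matrix.vecMul (fun _ => (1 : ℝ)) (BIter θ A v ω 0 n))))
        Filter.atTop ∧
    lam ≤ Filter.limsup
        (fun n : ℕ => (n : ℝ)⁻¹ *
          Real.log (∑ i : Fin k, ∑ j : Fin k, BIter θ A v ω 0 n i j))
        Filter.atTop := by
  have hA : ∀ ω i j, 0 ≤ A ω i j := fun ω i j => by rcases h01 ω i j with h | h <;> simp [h]
  have hA1 : ∀ ω i j, A ω i j ≤ 1 := fun ω i j => by rcases h01 ω i j with h | h <;> simp [h]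
  have hl1_pos : ∀ n, 0 < l1norm (Matrix.vecMul v (matIter θ A n ω)) := fun n => by
    obtain ⟨i, hi⟩ := (hsign n).1
    exact Finset.sum_pos' (fun j _ => abs_nonneg _) ⟨i, Finset.mem_univ i, abs_pos.2 hi.ne'⟩
  have hk : (1 : ℝ) ≤ k := by
    obtain ⟨i, -⟩ := (hsign 0).1
    exact_mod_cast i.pos
  have hentropy := le_limsup_inv_mul_log_of_le_mul hl1_pos
    (fun n => l1norm_vecMul_matIter_le θ v ω hA hA1 haper n (hsign (n + N)).1) hlim
    (isBoundedUnder_inv_mul_log_of_le_pow 2 hk (fun n => Finset.sum_nonneg fun i _ =>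
      Finset.sum_nonneg fun j _ => BIter_nonneg θ v ω hA n 0 i j) (sum_BIter_le_pow θ v ω hA hA1))
  refine ⟨?_, hentropy⟩
  simpa only [l1norm_one_vecMul (BIter_nonneg θ v ω hA _ 0)] using hentropy

/-- Suppose `A` is uniformly aperiodic: there is `N` with all entries of
`A^{(N)}(η)` at least `1` for every `η`.  Fix `ω`, `v` and `λ` with
`lim (1/n) log ‖v·A^{(n)}(ω)‖₁ = λ`, and assume each `v(θⁿω) = v·A^{(n)}(ω)` has a strictly
positive and a strictly negative coordinate.  Then
`limsup (1/n) log ‖𝟙·B^{(n)}(ω)‖₁ ≥ λ`; equivalently, the topological entropy of the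
subshift determined by `B` along the orbit of `ω`,
`limsup (1/n) log Σ_{i,j} B^{(n)}_{ij}(ω)`, is at least `λ`. -/
theorem subshift_entropy_ge_exponent
    {Ω : Type*} [MeasurableSpace Ω]
    (ℙ : Measure Ω) [IsProbabilityMeasure ℙ]
    (θ : Ω → Ω) (hθ : MeasurePreserving θ ℙ ℙ) (hθinv : Function.Bijective θ)
    (k : ℕ) (hk : 2 ≤ k)
    (A : Ω → Matrix (Fin k) (Fin k) ℝ)
    (hAmeas : ∀ i j, Measurable fun ω => A ω i j)
    (h01 : ∀ ω i j, A ω i j = 0 ∨ A ω i j = 1)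
    (N : ℕ) (haper : ∀ η i j, 1 ≤ matIter θ A N η i j)
    (ω : Ω) (v : Fin k → ℝ) (lam : ℝ)
    (hlim : Filter.Tendsto
      (fun n : ℕ => (n : ℝ)⁻¹ * Real.log (l1norm (Matrix.vecMul v (matIter θ A n ω))))
      Filter.atTop (𝓝 lam))
    (hsign : ∀ n : ℕ,
      (∃ i, 0 < Matrix.vecMul v (matIter θ A n ω) i) ∧
      (∃ i, Matrix.vecMul v (matIter θ A n ω) i < 0)) :
    lam ≤ Filter.limsup
        (fun n : ℕ => (n : ℝ)⁻¹ *
          Real.log (l1norm (Matrix.vecMul (fun _ => (1 : ℝ)) (BIter θ A v ω 0 n))))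
        Filter.atTop ∧
    lam ≤ Filter.limsup
        (fun n : ℕ => (n : ℝ)⁻¹ *
          Real.log (∑ i : Fin k, ∑ j : Fin k, BIter θ A v ω 0 n i j))
        Filter.atTop :=
  subshift_entropy_ge_exponent_general θ k A h01 N haper ω v lam hlim hsign
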